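/- arXiv:1607.00249 — 2 statements merged into one kernel-verified Lean document; each statement's English description precedes it below -/
import Mathlib

section
/- Let f₁, …, f_I : ℝ^m → ℝ be differentiable. Let (A[n])_{n∈ℕ} be a sequence of I×I column-stochastic nonnegative matrices with a_ii[n] ≥ κ > 0 for all i, n. Let x_i[n] ∈ ℝ^m be arbitrary sequences, and define φ_i[0] = 1, y_i[0] = ∇f_i(x_i[0]), and for n ≥ 0: φ_i[n+1] = Σ_{j=1}^I a_ij[n] φ_j[n] and y_i[n+1] = (1/φ_i[n+1]) (Σ_{j=1}^I a_ij[n] φ_j[n] y_j[n] + ∇f_i(x_i[n+1]) − ∇f_i(x_i[n])). Then for every n ∈ ℕ the tracking invariant Σ_{i=1}^I φ_i[n] y_i[n] = Σ_{i=1}^I ∇f_i(x_i[n]) holds. -/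
open scoped BigOperators

/-- The gradient-tracking invariant of SONATA: with column-stochastic nonnegative weights
having diagonal entries bounded below by `κ > 0`, initialization `φ_i[0] = 1`,
`y_i[0] = ∇f_i(x_i[0])`, and the updates of Algorithm 1, the φ-weighted sum of the local
trackers always equals the sum of the agents' current gradients:
`Σ_i φ_i[n] y_i[n] = Σ_i ∇f_i(x_i[n])`. -/
theorem sonata_tracking_invariant {I m : ℕ}
    (f : Fin I → EuclideanSpace ℝ (Fin m) → ℝ)
    (hfd : ∀ i, Differentiable ℝ (f i))
    (A : ℕ → Matrix (Fin I) (Fin I) ℝ) (κ : ℝ) (hκ : 0 < κ)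
    (hnn : ∀ n i j, 0 ≤ A n i j) (hdiag : ∀ n i, κ ≤ A n i i)
    (hcs : ∀ n j, ∑ i, A n i j = 1)
    (x y : ℕ → Fin I → EuclideanSpace ℝ (Fin m)) (φ : ℕ → Fin I → ℝ)
    (hφ0 : ∀ i, φ 0 i = 1)
    (hy0 : ∀ i, y 0 i = gradient (f i) (x 0 i))
    (hφ : ∀ n i, φ (n + 1) i = ∑ j, A n i j * φ n j)
    (hy : ∀ n i, y (n + 1) i = (φ (n + 1) i)⁻¹ •
        ((∑ j, (A n i j * φ n j) • y n j)
          + gradient (f i) (x (n + 1) i) - gradient (f i) (x n i))) :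
    ∀ n, ∑ i, φ n i • y n i = ∑ i, gradient (f i) (x n i) := by
  -- positivity of φ
  have hpos : ∀ n i, 0 < φ n i := by
    intro n
    induction n with
    | zero => intro i; rw [hφ0]; norm_num
    | succ n ih =>
      intro i
      rw [hφ n i]
      have h1 : 0 < A n i i * φ n i :=
        mul_pos (lt_of_lt_of_le hκ (hdiag n i)) (ih i)
      refine Finset.sum_pos' (fun j _ => mul_nonneg (hnn n i j) (ih j).le)
        ⟨i, Finset.mem_univ i, h1⟩
  intro n
  induction n with
  | zero =>
    simp [hφ0, hy0]
  | succ n ih =>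
    have key : ∀ i, φ (n + 1) i • y (n + 1) i =
        (∑ j, (A n i j * φ n j) • y n j)
          + gradient (f i) (x (n + 1) i) - gradient (f i) (x n i) := by
      intro i
      rw [hy n i, smul_smul, mul_inv_cancel₀ (hpos (n+1) i).ne', one_smul]
    calc ∑ i, φ (n + 1) i • y (n + 1) i
        = ∑ i, ((∑ j, (A n i j * φ n j) • y n j)
            + gradient (f i) (x (n + 1) i) - gradient (f i) (x n i)) := by
          exact Finset.sum_congr rfl (fun i _ => key i)
      _ = (∑ i, ∑ j, (A n i j * φ n j) • y n j)
            + ∑ i, gradient (f i) (x (n + 1) i) - ∑ i, gradient (f i) (x n i) := by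
          rw [Finset.sum_sub_distrib, Finset.sum_add_distrib]
      _ = (∑ j, φ n j • y n j)
            + ∑ i, gradient (f i) (x (n + 1) i) - ∑ i, gradient (f i) (x n i) := by
          congr 2
          rw [Finset.sum_comm]
          refine Finset.sum_congr rfl (fun j _ => ?_)
          rw [← Finset.sum_smul]
          congr 1
          rw [← Finset.sum_mul, hcs n j, one_mul]
      _ = ∑ i, gradient (f i) (x (n + 1) i) := by
          rw [ih]; abel
end

section
/- Let f₁,…,f_I : ℝ^m → ℝ be differentiable, let (A[n])_{n∈ℕ} be a sequence of I×I nonnegative doubly stochastic matrices with strictly positive diagonals, and let α[n] ∈ (0,1]. Run the SONATA updates with K = ℝ^m, G = 0, and the linearization surrogate with τ_i = I: φ_i[0] = 1, y_i[0] = ∇f_i(x_i[0]); x̃_i[n] = argmin_{x∈ℝ^m} ∇f_i(x_i[n])ᵀ(x − x_i[n]) + (I/2)‖x − x_i[n]‖² + (I·y_i[n] − ∇f_i(x_i[n]))ᵀ(x − x_i[n]); v_i[n] = x_i[n] + α[n](x̃_i[n] − x_i[n]); φ_i[n+1] = Σ_j a_ij[n]φ_j[n]; x_i[n+1] = (1/φ_i[n+1])Σ_j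 a_ij[n]φ_j[n]v_j[n]; y_i[n+1] = (1/φ_i[n+1])(Σ_j a_ij[n]φ_j[n]y_j[n] + ∇f_i(x_i[n+1]) − ∇f_i(x_i[n])). Then for all i and n: φ_i[n] = 1, x_i[n+1] = Σ_{j=1}^I a_ij[n](x_j[n] − α[n] y_j[n]), and y_i[n+1] = Σ_{j=1}^I a_ij[n] y_j[n] + ∇f_i(x_i[n+1]) − ∇f_i(x_i[n]). -/
open scoped RealInnerProductSpace BigOperators

/-- Reduction to ATC-SONATA-NEXT-L (equations (26)/(28), Aug-DGM / Qu–Li): running SONATA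
with `K = ℝ^m`, `G = 0`, the linearization surrogate with `τ_i = I`, and nonnegative doubly
stochastic weight matrices with strictly positive diagonals, one gets `φ_i[n] = 1`,
`x_i[n+1] = Σ_j a_ij[n](x_j[n] − α[n] y_j[n])` and
`y_i[n+1] = Σ_j a_ij[n] y_j[n] + ∇f_i(x_i[n+1]) − ∇f_i(x_i[n])`. -/
theorem sonata_reduces_to_augdgm {I m : ℕ} (hI : 0 < I)
    (f : Fin I → EuclideanSpace ℝ (Fin m) → ℝ)
    (hfd : ∀ i, Differentiable ℝ (f i))
    (A : ℕ → Matrix (Fin I) (Fin I) ℝ)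
    (hnn : ∀ n i j, 0 ≤ A n i j)
    (hcs : ∀ n j, ∑ i, A n i j = 1)
    (hrs : ∀ n i, ∑ j, A n i j = 1)
    (hdiag : ∀ n i, 0 < A n i i)
    (α : ℕ → ℝ) (hα : ∀ n, α n ∈ Set.Ioc (0 : ℝ) 1)
    (x v xt y : ℕ → Fin I → EuclideanSpace ℝ (Fin m))
    (φ : ℕ → Fin I → ℝ)
    (hφ0 : ∀ i, φ 0 i = 1)
    (hy0 : ∀ i, y 0 i = gradient (f i) (x 0 i))
    -- x̃_i[n] minimizes the linearized local subproblem over all of ℝ^m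
    (hxt : ∀ n i, ∀ z : EuclideanSpace ℝ (Fin m),
        ⟪gradient (f i) (x n i), xt n i - x n i⟫ + (I : ℝ) / 2 * ‖xt n i - x n i‖ ^ 2
          + ⟪(I : ℝ) • y n i - gradient (f i) (x n i), xt n i - x n i⟫
        ≤ ⟪gradient (f i) (x n i), z - x n i⟫ + (I : ℝ) / 2 * ‖z - x n i‖ ^ 2
          + ⟪(I : ℝ) • y n i - gradient (f i) (x n i), z - x n i⟫)
    (hv : ∀ n i, v n i = x n i + α n • (xt n i - x n i))
    (hφ : ∀ n i, φ (n + 1) i = ∑ j, A n i j * φ n j)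
    (hxu : ∀ n i, x (n + 1) i = (φ (n + 1) i)⁻¹ • ∑ j, (A n i j * φ n j) • v n j)
    (hyu : ∀ n i, y (n + 1) i = (φ (n + 1) i)⁻¹ •
        ((∑ j, (A n i j * φ n j) • y n j)
          + gradient (f i) (x (n + 1) i) - gradient (f i) (x n i))) :
    (∀ n i, φ n i = 1) ∧
    (∀ n i, x (n + 1) i = ∑ j, A n i j • (x n j - α n • y n j)) ∧
    (∀ n i, y (n + 1) i = (∑ j, A n i j • y n j)
      + gradient (f i) (x (n + 1) i) - gradient (f i) (x n i)) := by
  have hI' : (0:ℝ) < I := Nat.cast_pos.mpr hI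
  have hφall : ∀ n i, φ n i = 1 := by
    intro n
    induction n with
    | zero => exact hφ0
    | succ n ih =>
      intro i
      rw [hφ n i]
      simp only [ih, mul_one]
      exact hrs n i
  have hxt' : ∀ n i, xt n i = x n i - y n i := by
    intro n i
    have h := hxt n i (x n i - y n i)
    have hz : x n i - y n i - x n i = -y n i := by abel
    rw [hz] at h
    set d := xt n i - x n i with hd
    simp only [inner_sub_left, real_inner_smul_left, inner_neg_right, norm_neg,
      real_inner_self_eq_norm_sq] at h
    have hexp : ‖d + y n i‖ ^ 2 = ‖d‖ ^ 2 + 2 * ⟪d, y n i⟫ + ‖y n i‖ ^ 2 :=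
      norm_add_sq_real d (y n i)
    have hcomm : ⟪y n i, d⟫ = ⟪d, y n i⟫ := real_inner_comm _ _
    have h0 : ‖d + y n i‖ ^ 2 ≤ 0 := by nlinarith
    have h1 : d + y n i = 0 := by
      have := sq_nonneg ‖d + y n i‖
      have : ‖d + y n i‖ ^ 2 = 0 := le_antisymm h0 this
      have := pow_eq_zero_iff (n := 2) (by norm_num) |>.mp this
      exact norm_eq_zero.mp this
    have : xt n i - x n i + y n i = 0 := h1
    have h2 : xt n i = -y n i + x n i :=
      sub_eq_iff_eq_add.mp (eq_neg_of_add_eq_zero_left this)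
    rw [h2]; abel
  refine ⟨hφall, ?_, ?_⟩
  · intro n i
    rw [hxu n i]
    simp only [hφall, mul_one, inv_one, one_smul]
    refine Finset.sum_congr rfl fun j _ => ?_
    rw [hv n j, hxt' n j]
    module
  · intro n i
    rw [hyu n i]
    simp only [hφall, mul_one, inv_one, one_smul]
end
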